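/- Let V be a type, E ⊆ V × V, and for each (u,v) ∈ E let d^{uv} : Fin 3 → ℝ give a diagonal 3×3 real matrix diag(d^{uv}). For each u ∈ V let Π_u be a signed permutation matrix, and assume that for every (u,v) ∈ E the matrix Π_u · diag(d^{uv}) · (Π_v)ᵀ is diagonal. Define the relation R on V by: R u v iff ((u,v) ∈ E or (v,u) ∈ E) and the corresponding d has at least two nonzero entries (i.e. the β-matrix of the edge has rank greater than 1). Then for any u, v ∈ V related by the reflexive–transitive closure of R, the permutation parts of Π_u and Π_v coincide, i.e. the entrywise absolute values satisfy |Π_u| = |Π_v| as matrices. -/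
import Mathlib


open Matrix

/-- `M` is a signed permutation matrix: exactly one nonzero entry, equal to `±1`,
in each row and column. -/
def IsSignedPerm (M : Matrix (Fin 3) (Fin 3) ℝ) : Prop :=
  ∃ (p : Equiv.Perm (Fin 3)) (s : Fin 3 → ℝ),
    (∀ j, s j = 1 ∨ s j = -1) ∧ M = Matrix.of fun i j => if i = p j then s j else 0

lemma perm_ext3 : ∀ p q : Equiv.Perm (Fin 3), ∀ i j : Fin 3, i ≠ j →
    p i = q i → p j = q j → p = q := by decide

lemma signed_perm_diag_key {P R : Matrix (Fin 3) (Fin 3) ℝ} {dd e : Fin 3 → ℝ}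
    (hP : IsSignedPerm P) (hR : IsSignedPerm R)
    (h : P * Matrix.diagonal dd * Rᵀ = Matrix.diagonal e)
    (hd : ∃ i j : Fin 3, i ≠ j ∧ dd i ≠ 0 ∧ dd j ≠ 0) :
    ∀ i j, |P i j| = |R i j| := by
  obtain ⟨p, s, hs, rfl⟩ := hP
  obtain ⟨q, t, ht, rfl⟩ := hR
  obtain ⟨i, j, hij, hdi, hdj⟩ := hd
  have entry : ∀ a b, ∑ k, (if a = p k then s k else 0) * dd k * (if b = q k then t k else 0)
      = Matrix.diagonal e a b := by
    intro a b
    have := congrFun (congrFun h a) b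
    simpa [Matrix.mul_apply, Matrix.transpose_apply, Matrix.diagonal, Finset.sum_mul,
      mul_assoc] using this
  have agree : ∀ k, dd k ≠ 0 → p k = q k := by
    intro k hk
    by_contra hne
    have := entry (p k) (q k)
    rw [Finset.sum_eq_single k] at this
    · have h0 : s k * dd k * t k = 0 := by simpa [Matrix.diagonal, hne] using this
      have hsk : s k ≠ 0 := by rcases hs k with h2 | h2 <;> simp [h2]
      have htk : t k ≠ 0 := by rcases ht k with h2 | h2 <;> simp [h2]
      exact mul_ne_zero (mul_ne_zero hsk hk) htk h0
    · intro m _ hm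
      have : p k ≠ p m := fun hh => hm (p.injective hh).symm
      simp [this]
    · simp
  have hpq : p = q := perm_ext3 p q i j hij (agree i hdi) (agree j hdj)
  intro a b
  subst hpq
  by_cases hab : a = p b <;>
    simp [hab, abs_of_nonneg]
  · rcases hs b with h2 | h2 <;> rcases ht b with h3 | h3 <;> simp [h2, h3]

theorem perms_identical_on_high_rank_connected_components
    {V : Type*} (E : Set (V × V)) (d : V → V → Fin 3 → ℝ)
    (Q : V → Matrix (Fin 3) (Fin 3) ℝ) (hQ : ∀ u, IsSignedPerm (Q u))
    (hdiag : ∀ uv ∈ E, ∃ e : Fin 3 → ℝ,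
      Q uv.1 * Matrix.diagonal (d uv.1 uv.2) * (Q uv.2)ᵀ = Matrix.diagonal e)
    (R : V → V → Prop)
    (hR : ∀ u v, R u v ↔
      (((u, v) ∈ E ∧ ∃ i j : Fin 3, i ≠ j ∧ d u v i ≠ 0 ∧ d u v j ≠ 0) ∨
       ((v, u) ∈ E ∧ ∃ i j : Fin 3, i ≠ j ∧ d v u i ≠ 0 ∧ d v u j ≠ 0)))
    {u v : V} (huv : Relation.ReflTransGen R u v) :
    ∀ i j, |Q u i j| = |Q v i j| := by
  have step : ∀ a b, R a b → ∀ i j, |Q a i j| = |Q b i j| := by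
    intro a b hab
    rcases (hR a b).1 hab with ⟨hE, hd⟩ | ⟨hE, hd⟩
    · obtain ⟨e, he⟩ := hdiag (a, b) hE
      exact signed_perm_diag_key (hQ a) (hQ b) he hd
    · obtain ⟨e, he⟩ := hdiag (b, a) hE
      intro i j
      exact (signed_perm_diag_key (hQ b) (hQ a) he hd i j).symm
  induction huv with
  | refl => intro i j; rfl
  | tail _ hbc ih => intro i j; rw [ih i j, step _ _ hbc i j]
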